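/- arXiv:1902.08877 — 2 statements merged into one kernel-verified Lean document; each statement's English description precedes it below -/
import Mathlib

section
/- Let d ≥ 1, α ∈ ℝ, P ∈ Matrix (Fin d) (Fin d) ℝ, and C > 0 a real constant, and define the density-shaped function f : (Fin d → ℝ) → ℝ by f(x) = C · Real.exp(−(1/2) · (x ⬝ᵥ (P.mulVec x))). Then for all x, z ∈ Fin d → ℝ, letting x' := cos α • x + sin α • z and z' := sin α • x − cos α • z (the elliptical rotation map T_α applied to (x, z)), one has f(x') · f(z') = f(x) · f(z). -/
/-!
The exponent of the Gaussian density is a quadratic form `Q`, and the product of two densities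
is a function of `Q x + Q z`. Expanding `Q` along the polar form, the pair
`(cos α • x + sin α • z, sin α • x - cos α • z)` has the same value of `Q x + Q z`: the diagonal
terms pick up `cos² α + sin² α = 1` and the cross terms `± cos α sin α` cancel.
-/

open Matrix

namespace QuadraticMap

variable {R M N : Type*} [CommRing R] [AddCommGroup M] [AddCommGroup N] [Module R M] [Module R N]

theorem map_smul_add_smul (Q : QuadraticMap R M N) (a b : R) (x y : M) :
    Q (a • x + b • y) = (a * a) • Q x + (b * b) • Q y + (a * b) • polar Q x y := by
  rw [QuadraticMap.map_add Q, Q.map_smul, Q.map_smul, polar_smul_left, polar_smul_right, smul_smul]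

theorem map_rotate_add_map_reflect (Q : QuadraticMap R M N) {c s : R} (h : c * c + s * s = 1)
    (x z : M) : Q (c • x + s • z) + Q (s • x - c • z) = Q x + Q z := by
  rw [sub_eq_add_neg, ← neg_smul, Q.map_smul_add_smul, Q.map_smul_add_smul]
  linear_combination (norm := module) h • (Q x + Q z)

end QuadraticMap

theorem Matrix.toQuadraticForm'_apply {n R : Type*} [Fintype n] [DecidableEq n] [CommRing R]
    (P : Matrix n n R) (x : n → R) : P.toQuadraticForm' x = x ⬝ᵥ P *ᵥ x := by
  simp [Matrix.toQuadraticForm', Matrix.toLinearMap₂'_apply']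

theorem mul_exp_mul_mul_exp (C a b : ℝ) :
    C * Real.exp a * (C * Real.exp b) = C ^ 2 * Real.exp (a + b) := by
  rw [Real.exp_add]
  ring

theorem elliptical_rotation_gaussian_density_invariant_general
    (d : ℕ) (α : ℝ) (P : Matrix (Fin d) (Fin d) ℝ) (C : ℝ)
    (x z : Fin d → ℝ) :
    (fun y : Fin d → ℝ => C * Real.exp (-(1 / 2) * (y ⬝ᵥ P.mulVec y)))
        (Real.cos α • x + Real.sin α • z) *
      (fun y : Fin d → ℝ => C * Real.exp (-(1 / 2) * (y ⬝ᵥ P.mulVec y)))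
        (Real.sin α • x - Real.cos α • z) =
    (fun y : Fin d → ℝ => C * Real.exp (-(1 / 2) * (y ⬝ᵥ P.mulVec y))) x *
      (fun y : Fin d → ℝ => C * Real.exp (-(1 / 2) * (y ⬝ᵥ P.mulVec y))) z := by
  have hcs : Real.cos α * Real.cos α + Real.sin α * Real.sin α = 1 := by
    rw [← sq, ← sq, Real.cos_sq_add_sin_sq]
  have hQ := P.toQuadraticForm'.map_rotate_add_map_reflect hcs x z
  simp only [← Matrix.toQuadraticForm'_apply, mul_exp_mul_mul_exp, ← mul_add, hQ]

/-- Invariance of the (unnormalized) Gaussian density product under the elliptical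
rotation: for `f x = C * exp(−(1/2) xᵀ P x)`, with `x' = cos α • x + sin α • z` and
`z' = sin α • x − cos α • z`, one has `f x' * f z' = f x * f z`. -/
theorem elliptical_rotation_gaussian_density_invariant
    (d : ℕ) (hd : 1 ≤ d) (α : ℝ) (P : Matrix (Fin d) (Fin d) ℝ) (C : ℝ) (hC : 0 < C)
    (x z : Fin d → ℝ) :
    (fun y : Fin d → ℝ => C * Real.exp (-(1 / 2) * (y ⬝ᵥ P.mulVec y)))
        (Real.cos α • x + Real.sin α • z) *
      (fun y : Fin d → ℝ => C * Real.exp (-(1 / 2) * (y ⬝ᵥ P.mulVec y)))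
        (Real.sin α • x - Real.cos α • z) =
    (fun y : Fin d → ℝ => C * Real.exp (-(1 / 2) * (y ⬝ᵥ P.mulVec y))) x *
      (fun y : Fin d → ℝ => C * Real.exp (-(1 / 2) * (y ⬝ᵥ P.mulVec y))) z :=
  elliptical_rotation_gaussian_density_invariant_general d α P C x z
end

section
/- Let v : ℝ≥0 be a variance, let μ := gaussianReal 0 v be the Gaussian measure on ℝ with mean 0 and variance v, and let α ∈ ℝ. Then the pushforward of the product measure μ.prod μ on ℝ × ℝ under the map (x, z) ↦ (x * Real.cos α + z * Real.sin α, x * Real.sin α − z * Real.cos α) equals μ.prod μ. -/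
open MeasureTheory ProbabilityTheory

open scoped ENNReal
set_option maxHeartbeats 400000

/-- Product of two `withDensity` measures is `withDensity` of the product measure. -/
lemma aux_prod_withDensity {f g : ℝ → ℝ≥0∞} (hf : Measurable f) (hg : Measurable g)
    [SigmaFinite (volume.withDensity f)] [SigmaFinite (volume.withDensity g)] :
    (volume.withDensity f).prod (volume.withDensity g)
      = ((volume : Measure ℝ).prod (volume : Measure ℝ)).withDensity
          (fun p => f p.1 * g p.2) := by
  refine Measure.prod_eq fun s t hs ht => ?_
  rw [withDensity_apply _ (hs.prod ht), ← Measure.prod_restrict,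
    MeasureTheory.lintegral_prod_mul hf.aemeasurable hg.aemeasurable,
    withDensity_apply _ hs, withDensity_apply _ ht]

/-- Pushing forward a `withDensity` measure whose density is composed with the map. -/
lemma aux_map_withDensity {α β : Type*} [MeasurableSpace α] [MeasurableSpace β]
    {μ : Measure α} {T : α → β} (hT : Measurable T) (g : β → ℝ≥0∞) (hg : Measurable g) :
    Measure.map T (μ.withDensity (fun x => g (T x))) = (Measure.map T μ).withDensity g := by
  ext s hs
  rw [Measure.map_apply hT hs, withDensity_apply _ (hT hs), withDensity_apply _ hs,
    setLIntegral_map hs hg hT]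

/-- The rotation map as a linear map. -/
noncomputable def rotLM (α : ℝ) : (ℝ × ℝ) →ₗ[ℝ] ℝ × ℝ where
  toFun p := (p.1 * Real.cos α + p.2 * Real.sin α, p.1 * Real.sin α - p.2 * Real.cos α)
  map_add' p q := by dsimp; rw [Prod.ext_iff]; constructor <;> dsimp <;> ring
  map_smul' c p := by dsimp; rw [Prod.ext_iff]; constructor <;> dsimp <;> ring

lemma rotLM_det (α : ℝ) : LinearMap.det (rotLM α) = -1 := by
  have : LinearMap.toMatrix (Module.Basis.finTwoProd ℝ) (Module.Basis.finTwoProd ℝ) (rotLM α)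
      = !![Real.cos α, Real.sin α; Real.sin α, -Real.cos α] := by
    ext i j
    fin_cases i <;> fin_cases j <;>
      simp [LinearMap.toMatrix_apply, rotLM, Module.Basis.finTwoProd]
  rw [← LinearMap.det_toMatrix (Module.Basis.finTwoProd ℝ), this, Matrix.det_fin_two_of]
  have h := Real.sin_sq_add_cos_sq α
  nlinarith [h]

lemma rot_volume_preserving (α : ℝ) :
    Measure.map
      (fun p : ℝ × ℝ =>
        (p.1 * Real.cos α + p.2 * Real.sin α, p.1 * Real.sin α - p.2 * Real.cos α))
      (volume : Measure (ℝ × ℝ)) = volume := by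
  have h := Measure.map_linearMap_addHaar_eq_smul_addHaar (volume : Measure (ℝ × ℝ))
    (f := rotLM α) (by rw [rotLM_det]; norm_num)
  rw [rotLM_det, show |(-1 : ℝ)⁻¹| = 1 by norm_num, ENNReal.ofReal_one, one_smul] at h
  have hco : ⇑(rotLM α) = (fun p : ℝ × ℝ =>
      (p.1 * Real.cos α + p.2 * Real.sin α, p.1 * Real.sin α - p.2 * Real.cos α)) := rfl
  rwa [hco] at h

/-- Measure-theoretic invariance of the elliptical slice sampler's proposal: if `X, Z` are
independent draws from the centered Gaussian measure `gaussianReal 0 v`, then the rotated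
pair `(X cos α + Z sin α, X sin α − Z cos α)` has the same joint distribution. -/
theorem elliptical_rotation_gaussian_invariant
    (v : NNReal) (α : ℝ) :
    Measure.map
      (fun p : ℝ × ℝ =>
        (p.1 * Real.cos α + p.2 * Real.sin α, p.1 * Real.sin α - p.2 * Real.cos α))
      ((gaussianReal 0 v).prod (gaussianReal 0 v)) =
    (gaussianReal 0 v).prod (gaussianReal 0 v) := by
  set T : ℝ × ℝ → ℝ × ℝ := fun p =>
    (p.1 * Real.cos α + p.2 * Real.sin α, p.1 * Real.sin α - p.2 * Real.cos α) with hT_def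
  have hT : Measurable T := by fun_prop
  by_cases hv : v = 0
  · subst hv
    rw [gaussianReal_zero_var, Measure.dirac_prod, Measure.map_dirac' measurable_prodMk_left,
      Measure.map_dirac' hT]
    simp [T]
  · -- nonzero variance
    haveI hSF : SigmaFinite (volume.withDensity (gaussianPDF 0 v)) := by
      rw [← gaussianReal_of_var_ne_zero 0 hv]; infer_instance
    have hρ : Measurable (fun p : ℝ × ℝ => gaussianPDF 0 v p.1 * gaussianPDF 0 v p.2) :=
      ((measurable_gaussianPDF 0 v).comp measurable_fst).mul
        ((measurable_gaussianPDF 0 v).comp measurable_snd)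
    have hprod : (gaussianReal 0 v).prod (gaussianReal 0 v)
        = ((volume : Measure ℝ).prod (volume : Measure ℝ)).withDensity
            (fun p => gaussianPDF 0 v p.1 * gaussianPDF 0 v p.2) := by
      rw [gaussianReal_of_var_ne_zero _ hv]
      exact aux_prod_withDensity (measurable_gaussianPDF 0 v) (measurable_gaussianPDF 0 v)
    have hinv : (fun p : ℝ × ℝ => gaussianPDF 0 v p.1 * gaussianPDF 0 v p.2)
        = fun p => gaussianPDF 0 v (T p).1 * gaussianPDF 0 v (T p).2 := by
      funext p
      simp only [gaussianPDF]
      rw [← ENNReal.ofReal_mul (gaussianPDFReal_nonneg _ _ _),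
        ← ENNReal.ofReal_mul (gaussianPDFReal_nonneg _ _ _)]
      congr 1
      simp only [gaussianPDFReal, sub_zero, T]
      rw [mul_mul_mul_comm, mul_mul_mul_comm _ (Real.exp _), ← Real.exp_add, ← Real.exp_add]
      have hsq : (p.1 * Real.cos α + p.2 * Real.sin α) ^ 2
          + (p.1 * Real.sin α - p.2 * Real.cos α) ^ 2 = p.1 ^ 2 + p.2 ^ 2 := by
        nlinarith [Real.sin_sq_add_cos_sq α]
      rw [← add_div, ← add_div, ← neg_add, ← neg_add, hsq]
    calc Measure.map T ((gaussianReal 0 v).prod (gaussianReal 0 v))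
        = Measure.map T (((volume : Measure ℝ).prod (volume : Measure ℝ)).withDensity
            (fun p => gaussianPDF 0 v (T p).1 * gaussianPDF 0 v (T p).2)) := by
          rw [hprod, hinv]
      _ = (Measure.map T ((volume : Measure ℝ).prod (volume : Measure ℝ))).withDensity
            (fun p => gaussianPDF 0 v p.1 * gaussianPDF 0 v p.2) :=
          aux_map_withDensity hT (fun p : ℝ × ℝ => gaussianPDF 0 v p.1 * gaussianPDF 0 v p.2) hρ
      _ = (gaussianReal 0 v).prod (gaussianReal 0 v) := by
          rw [← Measure.volume_eq_prod, rot_volume_preserving, Measure.volume_eq_prod,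
            ← hprod]
end
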